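/- arXiv:0812.4902 — 10 statements merged into one kernel-verified Lean document; each statement's English description precedes it below -/
import Mathlib

section
/- Let A₁, A₂ : Ŵ → W be R-linear and skew-adjoint. Let f ∈ W, w ∈ Ŵ, and let ψ : ℕ → Ŵ be a sequence such that A₁(ψᵢ) = A₂(ψᵢ₊₁) for all i (an abstract Magri hierarchy: ψᵢ plays the role of the variational derivative of the conserved density Hᵢ of the evolution equation uₜ = f with Hamiltonian operators A₁, A₂). Assume ⟨ψᵢ, f⟩ = 0 for all i (each Hᵢ is a conserved density for uₜ = f) and A₂(w) = 0. Then ⟨ψᵢ, f + A₁(w)⟩ = 0 for all i; that is, every Hᵢ is a conserved density for the Kupershmidt deformation uₜ = f + A₁(w), A₂(w) = 0. (Kupershmidt's theorem.) -/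
section SkewAdjoint

variable {R W What Lambda : Type*} [CommSemiring R]
  [AddCommMonoid W] [Module R W] [AddCommMonoid What] [Module R What]
  [AddCommGroup Lambda] [Module R Lambda]

def IsSkewAdjointWrt (pair : What →ₗ[R] W →ₗ[R] Lambda) (A : What →ₗ[R] W) : Prop :=
  ∀ ψ χ : What, pair ψ (A χ) = - pair χ (A ψ)

theorem IsSkewAdjointWrt.pair_apply_ker_eq_zero {pair : What →ₗ[R] W →ₗ[R] Lambda}
    {A₁ A₂ : What →ₗ[R] W} (hA₁ : IsSkewAdjointWrt pair A₁) (hA₂ : IsSkewAdjointWrt pair A₂)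
    {x y w : What} (hxy : A₁ x = A₂ y) (hw : A₂ w = 0) :
    pair x (A₁ w) = 0 :=
  calc pair x (A₁ w) = - pair w (A₁ x) := hA₁ x w
    _ = - pair w (A₂ y) := by rw [hxy]
    _ = pair y (A₂ w) := by rw [hA₂ w y, neg_neg]
    _ = 0 := by rw [hw, map_zero]

end SkewAdjoint

/-- Kupershmidt's theorem, abstract form: if `A₁, A₂` are skew-adjoint,
`ψ` is an abstract Magri hierarchy (`A₁ ψᵢ = A₂ ψᵢ₊₁`), each `ψᵢ` pairs to zero with `f`,
and `A₂ w = 0`, then `⟨ψᵢ, f + A₁ w⟩ = 0` for all `i`. -/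
theorem kupershmidt_conserved_densities
    {R W What Lambda : Type*} [CommRing R]
    [AddCommGroup W] [Module R W] [AddCommGroup What] [Module R What]
    [AddCommGroup Lambda] [Module R Lambda]
    (pair : What →ₗ[R] W →ₗ[R] Lambda)
    (A₁ A₂ : What →ₗ[R] W)
    (hA₁ : ∀ ψ χ : What, pair ψ (A₁ χ) = - pair χ (A₁ ψ))
    (hA₂ : ∀ ψ χ : What, pair ψ (A₂ χ) = - pair χ (A₂ ψ))
    (f : W) (w : What) (ψ : ℕ → What)
    (hMagri : ∀ i : ℕ, A₁ (ψ i) = A₂ (ψ (i + 1)))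
    (hcons : ∀ i : ℕ, pair (ψ i) f = 0)
    (hw : A₂ w = 0) :
    ∀ i : ℕ, pair (ψ i) (f + A₁ w) = 0 := by
  intro i
  rw [map_add, hcons i, IsSkewAdjointWrt.pair_apply_ker_eq_zero hA₁ hA₂ (hMagri i) hw, add_zero]
end

section
/- Let F ∈ P, w ∈ κ̂. Let ℓ_F : κ → P have adjoint ℓ_F* : P̂ → κ̂, let A₁ : P̂ → κ have adjoint A₁* : κ̂ → P, let D₁ : κ → P (abstracting the linearization ℓ_{A₁*(w)}), let E₁ : P̂ → End_R(κ) assign to each ψ an R-linear operator E₁(ψ) (abstracting ℓ_{A₁,ψ}) with G₁(ψ) : κ̂ → κ̂ satisfying ⟨G₁(ψ)(χ), φ⟩_κ = ⟨χ, E₁(ψ)(φ)⟩_κ for all χ, φ, and let B₁* : P̂ × P̂ → P̂. Assume: (i) ⟨ψ₂, ℓ_F(A₁ψ₁) − A₁*(ℓ_F*ψ₁)⟩_P = ⟨B₁*(ψ₂,ψ₁), F⟩_P for all ψ₁, ψ₂ (the defect of A₁ against ℓ_F is B₁(F,·), with B₁* adjoint in the first argument); (ii) ⟨ψ, D₁(φ)⟩_P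 = ⟨G₁(ψ)(w), φ⟩_κ for all ψ ∈ P̂, φ ∈ κ; (iii) E₁(α)(A₁β) − E₁(β)(A₁α) = A₁(B₁*(α,β)) for all α, β ∈ P̂ (A₁ is Hamiltonian). Then for all ψ₁, ψ₂ ∈ P̂: ⟨ψ₂, ℓ_F(A₁ψ₁) + D₁(A₁ψ₁)⟩_P − ⟨ψ₁, ℓ_F(A₁ψ₂) + D₁(A₁ψ₂)⟩_P = ⟨B₁*(ψ₂,ψ₁), F + A₁*(w)⟩_P. (Pairing-level form of identity (12) of Lemma 3: ℓ_{F+A₁*(w)}∘A₁ − A₁*∘ℓ*_{F+A₁*(w)} = B₁(F+A₁*(w), ·).) -/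
/-!
The skew pairing `⟨ψ₂, L (A₁ ψ₁)⟩ - ⟨ψ₁, L (A₁ ψ₂)⟩` is additive in `L`, so `L = ℓ_F` and `L = D₁`
can be treated separately. For `ℓ_F`, moving `ℓ_F` and then `A₁` across the pairings turns the
subtracted term into `⟨ψ₂, A₁* (ℓ_F* ψ₁)⟩`, and (i) applies. For `D₁`, (ii) and the adjointness of
`G₁` turn the skew pairing into `⟨w, E₁(ψ₂)(A₁ ψ₁) - E₁(ψ₁)(A₁ ψ₂)⟩`, which by the Hamiltonian
property (iii) is `⟨w, A₁ B₁*(ψ₂, ψ₁)⟩ = ⟨B₁*(ψ₂, ψ₁), A₁* w⟩`.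
-/

section SkewPairing

variable {R P Phat K Khat Lambda : Type*} [CommRing R]
  [AddCommGroup P] [Module R P] [AddCommGroup Phat] [Module R Phat]
  [AddCommGroup K] [Module R K] [AddCommGroup Khat] [Module R Khat]
  [AddCommGroup Lambda] [Module R Lambda]
  (pP : Phat →ₗ[R] P →ₗ[R] Lambda) (pK : Khat →ₗ[R] K →ₗ[R] Lambda)
  {A : Phat →ₗ[R] K} {As : Khat →ₗ[R] P} {Bs : Phat → Phat → Phat}

theorem pairing_sub_swap_eq_of_defect {F : P} {l : K →ₗ[R] P} {ls : Phat →ₗ[R] Khat}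
    (hl : ∀ (ψ : Phat) (φ : K), pP ψ (l φ) = pK (ls ψ) φ)
    (hA : ∀ (ψ : Phat) (χ : Khat), pP ψ (As χ) = pK χ (A ψ))
    (hdefect : ∀ ψ₁ ψ₂ : Phat, pP ψ₂ (l (A ψ₁) - As (ls ψ₁)) = pP (Bs ψ₂ ψ₁) F)
    (ψ₁ ψ₂ : Phat) :
    pP ψ₂ (l (A ψ₁)) - pP ψ₁ (l (A ψ₂)) = pP (Bs ψ₂ ψ₁) F := by
  rw [← hdefect, map_sub, hA, hl ψ₁]

theorem pairing_sub_swap_eq_of_hamiltonian {w : Khat} {D : K →ₗ[R] P}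
    {E : Phat → K → K} {G : Phat → Khat → Khat}
    (hA : ∀ (ψ : Phat) (χ : Khat), pP ψ (As χ) = pK χ (A ψ))
    (hG : ∀ (ψ : Phat) (χ : Khat) (φ : K), pK (G ψ χ) φ = pK χ (E ψ φ))
    (hD : ∀ (ψ : Phat) (φ : K), pP ψ (D φ) = pK (G ψ w) φ)
    (hham : ∀ α β : Phat, E α (A β) - E β (A α) = A (Bs α β))
    (ψ₁ ψ₂ : Phat) :
    pP ψ₂ (D (A ψ₁)) - pP ψ₁ (D (A ψ₂)) = pP (Bs ψ₂ ψ₁) (As w) := by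
  rw [hA, ← hham, map_sub, hD, hD, hG, hG]

end SkewPairing

/-- pairing-level form of identity (12) of Lemma 3:
`ℓ_{F+A₁*(w)} ∘ A₁ − A₁* ∘ ℓ*_{F+A₁*(w)} = B₁(F + A₁*(w), ·)`. -/
theorem kupershmidt_lemma3_eq12
    {R P Phat K Khat Lambda : Type*} [CommRing R]
    [AddCommGroup P] [Module R P] [AddCommGroup Phat] [Module R Phat]
    [AddCommGroup K] [Module R K] [AddCommGroup Khat] [Module R Khat]
    [AddCommGroup Lambda] [Module R Lambda]
    (pP : Phat →ₗ[R] P →ₗ[R] Lambda) (pK : Khat →ₗ[R] K →ₗ[R] Lambda)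
    (F : P) (w : Khat)
    (lF : K →ₗ[R] P) (lFs : Phat →ₗ[R] Khat)
    (hlF : ∀ (ψ : Phat) (φ : K), pP ψ (lF φ) = pK (lFs ψ) φ)
    (A₁ : Phat →ₗ[R] K) (A₁s : Khat →ₗ[R] P)
    (hA₁ : ∀ (ψ : Phat) (χ : Khat), pP ψ (A₁s χ) = pK χ (A₁ ψ))
    (D₁ : K →ₗ[R] P)
    (E₁ : Phat → Module.End R K)
    (G₁ : Phat → Khat → Khat)
    (hG₁ : ∀ (ψ : Phat) (χ : Khat) (φ : K), pK (G₁ ψ χ) φ = pK χ (E₁ ψ φ))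
    (B₁s : Phat → Phat → Phat)
    (hi : ∀ ψ₁ ψ₂ : Phat,
      pP ψ₂ (lF (A₁ ψ₁) - A₁s (lFs ψ₁)) = pP (B₁s ψ₂ ψ₁) F)
    (hii : ∀ (ψ : Phat) (φ : K), pP ψ (D₁ φ) = pK (G₁ ψ w) φ)
    (hiii : ∀ α β : Phat, E₁ α (A₁ β) - E₁ β (A₁ α) = A₁ (B₁s α β)) :
    ∀ ψ₁ ψ₂ : Phat,
      pP ψ₂ (lF (A₁ ψ₁) + D₁ (A₁ ψ₁)) - pP ψ₁ (lF (A₁ ψ₂) + D₁ (A₁ ψ₂))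
        = pP (B₁s ψ₂ ψ₁) (F + A₁s w) := by
  intro ψ₁ ψ₂
  rw [map_add, map_add, map_add, add_sub_add_comm,
    pairing_sub_swap_eq_of_defect pP pK hlF hA₁ hi,
    pairing_sub_swap_eq_of_hamiltonian pP pK hA₁ hG₁ hii hiii]
end

section
/- Let F ∈ P, w ∈ κ̂. Let ℓ_F : κ → P have adjoint ℓ_F* : P̂ → κ̂, let A₁, A₂ : P̂ → κ have adjoints A₁*, A₂* : κ̂ → P, let D₁, D₂ : κ → P (abstracting the linearizations ℓ_{A₁*(w)}, ℓ_{A₂*(w)}), let E₁, E₂ : P̂ → End_R(κ) (abstracting ψ ↦ ℓ_{A₁,ψ}, ℓ_{A₂,ψ}) with G₁(ψ), G₂(ψ) : κ̂ → κ̂ satisfying ⟨Gᵢ(ψ)(χ), φ⟩_κ = ⟨χ, Eᵢ(ψ)(φ)⟩_κ for all χ, φ, and let B₁*, B₂* : P̂ × P̂ → P̂. Assume: (i) ⟨ψ₂, ℓ_F(A₂ψ₁) − A₂*(ℓ_F*ψ₁)⟩_P = ⟨B₂*(ψ₂,ψ₁), F⟩_P for all ψ₁, ψ₂; (ii) ⟨ψ,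 Dᵢ(φ)⟩_P = ⟨Gᵢ(ψ)(w), φ⟩_κ for all ψ ∈ P̂, φ ∈ κ and i = 1, 2; (iii) E₁(α)(A₂β) − E₁(β)(A₂α) + E₂(α)(A₁β) − E₂(β)(A₁α) = A₁(B₂*(α,β)) + A₂(B₁*(α,β)) for all α, β ∈ P̂ (the Schouten bracket [[A₁,A₂]] vanishes). Then for all ψ₁, ψ₂ ∈ P̂: ⟨ψ₂, ℓ_F(A₂ψ₁) + D₁(A₂ψ₁) + D₂(A₁ψ₁)⟩_P − ⟨ψ₁, ℓ_F(A₂ψ₂) + D₁(A₂ψ₂) + D₂(A₁ψ₂)⟩_P = ⟨B₂*(ψ₂,ψ₁), F + A₁*(w)⟩_P + ⟨B₁*(ψ₂,ψ₁), A₂*(w)⟩_P. (Pairing-level form of the mixed identity (13) of Lemma 3.) -/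
/-!
Pair the vanishing of the Schouten bracket (iii) with `w`: by (ii) and the adjointness of `Gᵢ`
and `Eᵢ`, the left side becomes the antisymmetrised `D`-terms, and by the adjointness of `Aᵢ*`
the right side becomes `⟨B₂*, A₁* w⟩ + ⟨B₁*, A₂* w⟩`. The antisymmetrised `ℓ_F`-term is
`⟨B₂*, F⟩` by (i), once `⟨ψ₁, ℓ_F(A₂ψ₂)⟩` is moved across both adjunctions to
`⟨ψ₂, A₂*(ℓ_F* ψ₁)⟩`. Adding the two identities gives the claim.
-/

section Pairings

variable {R P Phat K Khat Lambda : Type*} [CommRing R]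
    [AddCommGroup P] [Module R P] [AddCommGroup Phat] [Module R Phat]
    [AddCommGroup K] [Module R K] [AddCommGroup Khat] [Module R Khat]
    [AddCommGroup Lambda] [Module R Lambda]
    (pP : Phat →ₗ[R] P →ₗ[R] Lambda) (pK : Khat →ₗ[R] K →ₗ[R] Lambda)

theorem pairing_antisymm_comp_eq_pairing_sub_adjoint
    {L : K → P} {Ls : Phat → Khat} (hL : ∀ ψ φ, pP ψ (L φ) = pK (Ls ψ) φ)
    {A : Phat → K} {As : Khat → P} (hA : ∀ ψ χ, pP ψ (As χ) = pK χ (A ψ)) (ψ₁ ψ₂ : Phat) :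
    pP ψ₂ (L (A ψ₁)) - pP ψ₁ (L (A ψ₂)) = pP ψ₂ (L (A ψ₁) - As (Ls ψ₁)) := by
  rw [map_sub, hL ψ₁, hA]

theorem pairing_apply_eq_pairing_adjoint_apply {w : Khat} {D : K → P}
    {E : Phat → K → K} {G : Phat → Khat → Khat}
    (hD : ∀ ψ φ, pP ψ (D φ) = pK (G ψ w) φ) (hG : ∀ ψ χ φ, pK (G ψ χ) φ = pK χ (E ψ φ))
    (ψ : Phat) (φ : K) :
    pP ψ (D φ) = pK w (E ψ φ) := by
  rw [hD, hG]

theorem pairing_schouten_eq {A₁ A₂ : Phat → K} {A₁s A₂s : Khat → P}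
    (hA₁ : ∀ ψ χ, pP ψ (A₁s χ) = pK χ (A₁ ψ)) (hA₂ : ∀ ψ χ, pP ψ (A₂s χ) = pK χ (A₂ ψ))
    {E₁ E₂ : Phat → K → K} {B₁s B₂s : Phat → Phat → Phat}
    (hS : ∀ α β, E₁ α (A₂ β) - E₁ β (A₂ α) + E₂ α (A₁ β) - E₂ β (A₁ α)
        = A₁ (B₂s α β) + A₂ (B₁s α β))
    (w : Khat) (α β : Phat) :
    pK w (E₁ α (A₂ β)) - pK w (E₁ β (A₂ α)) + pK w (E₂ α (A₁ β)) - pK w (E₂ β (A₁ α))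
      = pP (B₂s α β) (A₁s w) + pP (B₁s α β) (A₂s w) := by
  simp only [← map_sub, ← map_add, hS, hA₁, hA₂]

end Pairings

/-- pairing-level form of the mixed identity (13) of Lemma 3. -/
theorem kupershmidt_lemma3_eq13
    {R P Phat K Khat Lambda : Type*} [CommRing R]
    [AddCommGroup P] [Module R P] [AddCommGroup Phat] [Module R Phat]
    [AddCommGroup K] [Module R K] [AddCommGroup Khat] [Module R Khat]
    [AddCommGroup Lambda] [Module R Lambda]
    (pP : Phat →ₗ[R] P →ₗ[R] Lambda) (pK : Khat →ₗ[R] K →ₗ[R] Lambda)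
    (F : P) (w : Khat)
    (lF : K →ₗ[R] P) (lFs : Phat →ₗ[R] Khat)
    (hlF : ∀ (ψ : Phat) (φ : K), pP ψ (lF φ) = pK (lFs ψ) φ)
    (A₁ A₂ : Phat →ₗ[R] K) (A₁s A₂s : Khat →ₗ[R] P)
    (hA₁ : ∀ (ψ : Phat) (χ : Khat), pP ψ (A₁s χ) = pK χ (A₁ ψ))
    (hA₂ : ∀ (ψ : Phat) (χ : Khat), pP ψ (A₂s χ) = pK χ (A₂ ψ))
    (D₁ D₂ : K →ₗ[R] P)
    (E₁ E₂ : Phat → Module.End R K)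
    (G₁ G₂ : Phat → Khat → Khat)
    (hG₁ : ∀ (ψ : Phat) (χ : Khat) (φ : K), pK (G₁ ψ χ) φ = pK χ (E₁ ψ φ))
    (hG₂ : ∀ (ψ : Phat) (χ : Khat) (φ : K), pK (G₂ ψ χ) φ = pK χ (E₂ ψ φ))
    (B₁s B₂s : Phat → Phat → Phat)
    (hi : ∀ ψ₁ ψ₂ : Phat,
      pP ψ₂ (lF (A₂ ψ₁) - A₂s (lFs ψ₁)) = pP (B₂s ψ₂ ψ₁) F)
    (hii₁ : ∀ (ψ : Phat) (φ : K), pP ψ (D₁ φ) = pK (G₁ ψ w) φ)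
    (hii₂ : ∀ (ψ : Phat) (φ : K), pP ψ (D₂ φ) = pK (G₂ ψ w) φ)
    (hiii : ∀ α β : Phat,
      E₁ α (A₂ β) - E₁ β (A₂ α) + E₂ α (A₁ β) - E₂ β (A₁ α)
        = A₁ (B₂s α β) + A₂ (B₁s α β)) :
    ∀ ψ₁ ψ₂ : Phat,
      pP ψ₂ (lF (A₂ ψ₁) + D₁ (A₂ ψ₁) + D₂ (A₁ ψ₁))
        - pP ψ₁ (lF (A₂ ψ₂) + D₁ (A₂ ψ₂) + D₂ (A₁ ψ₂))
        = pP (B₂s ψ₂ ψ₁) (F + A₁s w) + pP (B₁s ψ₂ ψ₁) (A₂s w) := by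
  intro ψ₁ ψ₂
  have hℓ : pP ψ₂ (lF (A₂ ψ₁)) - pP ψ₁ (lF (A₂ ψ₂)) = pP (B₂s ψ₂ ψ₁) F := by
    rw [pairing_antisymm_comp_eq_pairing_sub_adjoint pP pK hlF hA₂, hi]
  have hS := pairing_schouten_eq pP pK hA₁ hA₂ hiii w ψ₂ ψ₁
  simp only [map_add,
    pairing_apply_eq_pairing_adjoint_apply pP pK hii₁ hG₁,
    pairing_apply_eq_pairing_adjoint_apply pP pK hii₂ hG₂] at hS ⊢
  linear_combination (norm := abel) hℓ + hS
end

section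
/- Let w ∈ κ̂. Let A₂ : P̂ → κ have adjoint A₂* : κ̂ → P, let D₂ : κ → P (abstracting the linearization ℓ_{A₂*(w)}), let E₂ : P̂ → End_R(κ) (abstracting ψ ↦ ℓ_{A₂,ψ}) with G₂(ψ) : κ̂ → κ̂ satisfying ⟨G₂(ψ)(χ), φ⟩_κ = ⟨χ, E₂(ψ)(φ)⟩_κ for all χ, φ, and let B₂* : P̂ × P̂ → P̂. Assume: (i) ⟨ψ, D₂(φ)⟩_P = ⟨G₂(ψ)(w), φ⟩_κ for all ψ ∈ P̂, φ ∈ κ; (ii) E₂(α)(A₂β) − E₂(β)(A₂α) = A₂(B₂*(α,β)) for all α, β ∈ P̂ (A₂ is Hamiltonian). Then for all ψ₁, ψ₂ ∈ P̂: ⟨ψ₂, D₂(A₂ψ₁)⟩_P − ⟨ψ₁, D₂(A₂ψ₂)⟩_P = ⟨B₂*(ψ₂,ψ₁), A₂*(w)⟩_P. (Pairing-level form of identity (14) of Lemma 3: ℓ_{A₂*(w)}∘A₂ − A₂*∘ℓ*_{A₂*(w)} = B₂(A₂*(w), ·).) -/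
/-- pairing-level form of identity (14) of Lemma 3:
`ℓ_{A₂*(w)} ∘ A₂ − A₂* ∘ ℓ*_{A₂*(w)} = B₂(A₂*(w), ·)`. -/
theorem kupershmidt_lemma3_eq14
    {R P Phat K Khat Lambda : Type*} [CommRing R]
    [AddCommGroup P] [Module R P] [AddCommGroup Phat] [Module R Phat]
    [AddCommGroup K] [Module R K] [AddCommGroup Khat] [Module R Khat]
    [AddCommGroup Lambda] [Module R Lambda]
    (pP : Phat →ₗ[R] P →ₗ[R] Lambda) (pK : Khat →ₗ[R] K →ₗ[R] Lambda)
    (w : Khat)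
    (A₂ : Phat →ₗ[R] K) (A₂s : Khat →ₗ[R] P)
    (hA₂ : ∀ (ψ : Phat) (χ : Khat), pP ψ (A₂s χ) = pK χ (A₂ ψ))
    (D₂ : K →ₗ[R] P)
    (E₂ : Phat → Module.End R K)
    (G₂ : Phat → Khat → Khat)
    (hG₂ : ∀ (ψ : Phat) (χ : Khat) (φ : K), pK (G₂ ψ χ) φ = pK χ (E₂ ψ φ))
    (B₂s : Phat → Phat → Phat)
    (hi : ∀ (ψ : Phat) (φ : K), pP ψ (D₂ φ) = pK (G₂ ψ w) φ)
    (hii : ∀ α β : Phat, E₂ α (A₂ β) - E₂ β (A₂ α) = A₂ (B₂s α β)) :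
    ∀ ψ₁ ψ₂ : Phat,
      pP ψ₂ (D₂ (A₂ ψ₁)) - pP ψ₁ (D₂ (A₂ ψ₂)) = pP (B₂s ψ₂ ψ₁) (A₂s w) := by
  intro ψ₁ ψ₂
  calc pP ψ₂ (D₂ (A₂ ψ₁)) - pP ψ₁ (D₂ (A₂ ψ₂))
      = pK (G₂ ψ₂ w) (A₂ ψ₁) - pK (G₂ ψ₁ w) (A₂ ψ₂) := by rw [hi, hi]
    _ = pK w (E₂ ψ₂ (A₂ ψ₁) - E₂ ψ₁ (A₂ ψ₂)) := by rw [hG₂, hG₂, map_sub]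
    _ = pK w (A₂ (B₂s ψ₂ ψ₁)) := by rw [hii]
    _ = pP (B₂s ψ₂ ψ₁) (A₂s w) := (hA₂ _ w).symm
end

section
/- Set b₁₁ = ℓ₁∘a₁ − a₁*∘ℓ₁*, c = ℓ₁∘a₂ + ℓ₂∘a₁ − a₁*∘ℓ₂* − a₂*∘ℓ₁*, and b₂₂ = ℓ₂∘a₂ − a₂*∘ℓ₂* (all maps P̂ → P). Then for all (ψ, ψ') ∈ P̂ ⊕ P̂: (ℓ̃∘Ã₁ − Ã₁†∘ℓ̃†)(ψ, ψ') = (b₁₁(ψ) − b₁₁(ψ'), −b₁₁(ψ) − c(ψ') − b₂₂(ψ')). In the variational interpretation, with b₁₁ = B₁(F+A₁*(w),·), c = B₂(F+A₁*(w),·) + B₁(A₂*(w),·), b₂₂ = B₂(A₂*(w),·), this is the identity ℓ_{F̃}∘Ã₁ − Ã₁*∘ℓ*_{F̃} = B̃₁(F̃, ·) of Proposition 4, which shows that Ã₁ defines a variational bivector on the Kupershmidt deformation F̃ = 0. -/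
/-- Proposition 4, identity (20) for `Ã₁`:
`ℓ̃∘Ã₁ − Ã₁†∘ℓ̃† = (b₁₁(ψ) − b₁₁(ψ'), −b₁₁(ψ) − c(ψ') − b₂₂(ψ'))`. -/
theorem kupershmidt_prop4_A1
    {R P Phat K Khat : Type*} [CommRing R]
    [AddCommGroup P] [Module R P] [AddCommGroup Phat] [Module R Phat]
    [AddCommGroup K] [Module R K] [AddCommGroup Khat] [Module R Khat]
    (l₁ l₂ : K →ₗ[R] P) (l₁s l₂s : Phat →ₗ[R] Khat)
    (a₁ a₂ : Phat →ₗ[R] K) (a₁s a₂s : Khat →ₗ[R] P)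
    -- the block maps of the Kupershmidt deformation
    (ltil : K × Khat → P × P)
    (hltil : ∀ x : K × Khat, ltil x = (l₁ x.1 + a₁s x.2, l₂ x.1 + a₂s x.2))
    (ltild : Phat × Phat → Khat × K)
    (hltild : ∀ x : Phat × Phat, ltild x = (l₁s x.1 + l₂s x.2, a₁ x.1 + a₂ x.2))
    (Atil₁ : Phat × Phat → K × Khat)
    (hAtil₁ : ∀ x : Phat × Phat, Atil₁ x = (a₁ x.1 - a₁ x.2, l₁s x.2 + l₂s x.2))
    (Atil₁d : Khat × K → P × P)
    (hAtil₁d : ∀ x : Khat × K, Atil₁d x = (a₁s x.1, -a₁s x.1 + (l₁ x.2 + l₂ x.2)))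
    -- the defect operators
    (b₁₁ c b₂₂ : Phat → P)
    (hb₁₁ : ∀ ψ : Phat, b₁₁ ψ = l₁ (a₁ ψ) - a₁s (l₁s ψ))
    (hc : ∀ ψ : Phat, c ψ = l₁ (a₂ ψ) + l₂ (a₁ ψ) - a₁s (l₂s ψ) - a₂s (l₁s ψ))
    (hb₂₂ : ∀ ψ : Phat, b₂₂ ψ = l₂ (a₂ ψ) - a₂s (l₂s ψ)) :
    ∀ ψ ψ' : Phat,
      ltil (Atil₁ (ψ, ψ')) - Atil₁d (ltild (ψ, ψ'))
        = (b₁₁ ψ - b₁₁ ψ', -b₁₁ ψ - c ψ' - b₂₂ ψ') := by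
  intro ψ ψ'
  simp only [hltil, hltild, hAtil₁, hAtil₁d, hb₁₁, hc, hb₂₂, Prod.mk_sub_mk, Prod.mk.injEq,
    map_add, map_sub]
  constructor <;> abel
end

section
/- Set b₁₁ = ℓ₁∘a₁ − a₁*∘ℓ₁*, c = ℓ₁∘a₂ + ℓ₂∘a₁ − a₁*∘ℓ₂* − a₂*∘ℓ₁*, and b₂₂ = ℓ₂∘a₂ − a₂*∘ℓ₂* (all maps P̂ → P). Then for all (ψ, ψ') ∈ P̂ ⊕ P̂: (ℓ̃∘Ã₂ − Ã₂†∘ℓ̃†)(ψ, ψ') = (b₁₁(ψ) + c(ψ) + b₂₂(ψ'), b₂₂(ψ) − b₂₂(ψ')). In the variational interpretation, with b₁₁ = B₁(F+A₁*(w),·), c = B₂(F+A₁*(w),·) + B₁(A₂*(w),·), b₂₂ = B₂(A₂*(w),·), this is the identity ℓ_{F̃}∘Ã₂ − Ã₂*∘ℓ*_{F̃} = B̃₂(F̃, ·) of Proposition 4, which shows that Ã₂ defines a variational bivector on the Kupershmidt deformation F̃ = 0. -/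
/-- Proposition 4, identity (21) for `Ã₂`:
`ℓ̃∘Ã₂ − Ã₂†∘ℓ̃† = (b₁₁(ψ) + c(ψ) + b₂₂(ψ'), b₂₂(ψ) − b₂₂(ψ'))`. -/
theorem kupershmidt_prop4_A2
    {R P Phat K Khat : Type*} [CommRing R]
    [AddCommGroup P] [Module R P] [AddCommGroup Phat] [Module R Phat]
    [AddCommGroup K] [Module R K] [AddCommGroup Khat] [Module R Khat]
    (l₁ l₂ : K →ₗ[R] P) (l₁s l₂s : Phat →ₗ[R] Khat)
    (a₁ a₂ : Phat →ₗ[R] K) (a₁s a₂s : Khat →ₗ[R] P)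
    -- the block maps of the Kupershmidt deformation
    (ltil : K × Khat → P × P)
    (hltil : ∀ x : K × Khat, ltil x = (l₁ x.1 + a₁s x.2, l₂ x.1 + a₂s x.2))
    (ltild : Phat × Phat → Khat × K)
    (hltild : ∀ x : Phat × Phat, ltild x = (l₁s x.1 + l₂s x.2, a₁ x.1 + a₂ x.2))
    (Atil₂ : Phat × Phat → K × Khat)
    (hAtil₂ : ∀ x : Phat × Phat, Atil₂ x = (a₂ x.1 - a₂ x.2, -(l₁s x.1 + l₂s x.1)))
    (Atil₂d : Khat × K → P × P)
    (hAtil₂d : ∀ x : Khat × K, Atil₂d x = (a₂s x.1 - (l₁ x.2 + l₂ x.2), -a₂s x.1))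
    -- the defect operators
    (b₁₁ c b₂₂ : Phat → P)
    (hb₁₁ : ∀ ψ : Phat, b₁₁ ψ = l₁ (a₁ ψ) - a₁s (l₁s ψ))
    (hc : ∀ ψ : Phat, c ψ = l₁ (a₂ ψ) + l₂ (a₁ ψ) - a₁s (l₂s ψ) - a₂s (l₁s ψ))
    (hb₂₂ : ∀ ψ : Phat, b₂₂ ψ = l₂ (a₂ ψ) - a₂s (l₂s ψ)) :
    ∀ ψ ψ' : Phat,
      ltil (Atil₂ (ψ, ψ')) - Atil₂d (ltild (ψ, ψ'))
        = (b₁₁ ψ + c ψ + b₂₂ ψ', b₂₂ ψ - b₂₂ ψ') := by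
  intro ψ ψ'
  simp only [hltil, hltild, hAtil₂, hAtil₂d, hb₁₁, hc, hb₂₂, Prod.mk_sub_mk,
    map_add, map_sub, map_neg, Prod.mk.injEq]
  constructor <;> abel
end

section
/- Assume ℓ₁∘a₁ = a₁*∘ℓ₁*, ℓ₂∘a₂ = a₂*∘ℓ₂*, and ℓ₁∘a₂ + ℓ₂∘a₁ = a₁*∘ℓ₂* + a₂*∘ℓ₁* (the identities of Lemma 3 restricted to the Kupershmidt deformation). Then ℓ̃∘Ã₁ = Ã₁†∘ℓ̃† and ℓ̃∘Ã₂ = Ã₂†∘ℓ̃†. (This is the variational-bivector condition ℓ_{Ẽ}∘Ã = Ã*∘ℓ*_{Ẽ} for Ã₁ and Ã₂ on the Kupershmidt deformation, the final claim of Proposition 4.) -/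
/-!
Writing `ℓ̃`, `ℓ̃†`, `Ãᵢ`, `Ãᵢ†` as 2×2 block operators, each block of `ℓ̃ Ãᵢ - Ãᵢ† ℓ̃†` is a
combination of the three relations `ℓ₁ a₁ = a₁* ℓ₁*`, `ℓ₂ a₂ = a₂* ℓ₂*` and
`ℓ₁ a₂ + ℓ₂ a₁ = a₁* ℓ₂* + a₂* ℓ₁*`. The first row of `ℓ̃ Ã₁` needs only the first relation
and the second row of `ℓ̃ Ã₂` only the second; the other rows need the mixed one as well.
-/

namespace Kupershmidt

variable {R P Phat K Khat : Type*} [CommRing R]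
  [AddCommGroup P] [Module R P] [AddCommGroup Phat] [Module R Phat]
  [AddCommGroup K] [Module R K] [AddCommGroup Khat] [Module R Khat]
  (l₁ l₂ : K →ₗ[R] P) (l₁s l₂s : Phat →ₗ[R] Khat)
  (a₁ a₂ : Phat →ₗ[R] K) (a₁s a₂s : Khat →ₗ[R] P)

/-- `linearization` is `ℓ̃`, `bivectorᵢ` is `Ãᵢ`, and the `Adjoint` maps are `ℓ̃†` and `Ãᵢ†`. -/
def linearization : K × Khat →ₗ[R] P × P :=
  (l₁.coprod a₁s).prod (l₂.coprod a₂s)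

def linearizationAdjoint : Phat × Phat →ₗ[R] Khat × K :=
  (l₁s.coprod l₂s).prod (a₁.coprod a₂)

def bivector₁ : Phat × Phat →ₗ[R] K × Khat :=
  (a₁.coprod (-a₁)).prod ((l₁s + l₂s) ∘ₗ LinearMap.snd R Phat Phat)

def bivector₁Adjoint : Khat × K →ₗ[R] P × P :=
  (a₁s ∘ₗ LinearMap.fst R Khat K).prod ((-a₁s).coprod (l₁ + l₂))

def bivector₂ : Phat × Phat →ₗ[R] K × Khat :=
  (a₂.coprod (-a₂)).prod (-(l₁s + l₂s) ∘ₗ LinearMap.fst R Phat Phat)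

def bivector₂Adjoint : Khat × K →ₗ[R] P × P :=
  (a₂s.coprod (-(l₁ + l₂))).prod (-a₂s ∘ₗ LinearMap.fst R Khat K)

variable {l₁ l₂ l₁s l₂s a₁ a₂ a₁s a₂s}

theorem linearization_apply (x : K × Khat) :
    linearization l₁ l₂ a₁s a₂s x = (l₁ x.1 + a₁s x.2, l₂ x.1 + a₂s x.2) := rfl

theorem linearizationAdjoint_apply (x : Phat × Phat) :
    linearizationAdjoint l₁s l₂s a₁ a₂ x = (l₁s x.1 + l₂s x.2, a₁ x.1 + a₂ x.2) := rfl

theorem bivector₁_apply (x : Phat × Phat) :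
    bivector₁ l₁s l₂s a₁ x = (a₁ x.1 - a₁ x.2, l₁s x.2 + l₂s x.2) := by
  simp [bivector₁, sub_eq_add_neg]

theorem bivector₁Adjoint_apply (x : Khat × K) :
    bivector₁Adjoint l₁ l₂ a₁s x = (a₁s x.1, -a₁s x.1 + (l₁ x.2 + l₂ x.2)) := rfl

theorem bivector₂_apply (x : Phat × Phat) :
    bivector₂ l₁s l₂s a₂ x = (a₂ x.1 - a₂ x.2, -(l₁s x.1 + l₂s x.1)) := by
  simp [bivector₂, sub_eq_add_neg]

theorem bivector₂Adjoint_apply (x : Khat × K) :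
    bivector₂Adjoint l₁ l₂ a₂s x = (a₂s x.1 - (l₁ x.2 + l₂ x.2), -a₂s x.1) := by
  simp [bivector₂Adjoint, sub_eq_add_neg]

theorem linearization_comp_bivector₁ (h11 : l₁ ∘ₗ a₁ = a₁s ∘ₗ l₁s)
    (h22 : l₂ ∘ₗ a₂ = a₂s ∘ₗ l₂s) (h12 : l₁ ∘ₗ a₂ + l₂ ∘ₗ a₁ = a₁s ∘ₗ l₂s + a₂s ∘ₗ l₁s) :
    linearization l₁ l₂ a₁s a₂s ∘ₗ bivector₁ l₁s l₂s a₁ =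
      bivector₁Adjoint l₁ l₂ a₁s ∘ₗ linearizationAdjoint l₁s l₂s a₁ a₂ := by
  simp only [LinearMap.ext_iff, LinearMap.comp_apply, LinearMap.add_apply] at h11 h22 h12
  ext ψ <;>
    simp only [LinearMap.coe_comp, LinearMap.coe_inl, LinearMap.coe_inr, Function.comp_apply,
      linearization_apply, linearizationAdjoint_apply, bivector₁_apply, bivector₁Adjoint_apply,
      map_zero, map_add, map_neg, sub_zero, zero_sub, add_zero, zero_add]
  · exact h11 ψ
  · linear_combination (norm := abel) -h11 ψ
  · linear_combination (norm := abel) -h11 ψ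
  · linear_combination (norm := abel) -h22 ψ - h12 ψ

theorem linearization_comp_bivector₂ (h11 : l₁ ∘ₗ a₁ = a₁s ∘ₗ l₁s)
    (h22 : l₂ ∘ₗ a₂ = a₂s ∘ₗ l₂s) (h12 : l₁ ∘ₗ a₂ + l₂ ∘ₗ a₁ = a₁s ∘ₗ l₂s + a₂s ∘ₗ l₁s) :
    linearization l₁ l₂ a₁s a₂s ∘ₗ bivector₂ l₁s l₂s a₂ =
      bivector₂Adjoint l₁ l₂ a₂s ∘ₗ linearizationAdjoint l₁s l₂s a₁ a₂ := by
  simp only [LinearMap.ext_iff, LinearMap.comp_apply, LinearMap.add_apply] at h11 h22 h12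
  ext ψ <;>
    simp only [LinearMap.coe_comp, LinearMap.coe_inl, LinearMap.coe_inr, Function.comp_apply,
      linearization_apply, linearizationAdjoint_apply, bivector₂_apply, bivector₂Adjoint_apply,
      map_zero, map_add, map_neg, neg_zero, sub_zero, zero_sub, add_zero, zero_add]
  · linear_combination (norm := abel) h11 ψ + h12 ψ
  · linear_combination (norm := abel) h22 ψ
  · linear_combination (norm := abel) h22 ψ
  · exact neg_inj.mpr (h22 ψ)

end Kupershmidt

open Kupershmidt in
/-- final claim of Proposition 4: under the restricted Lemma 3
identities, `ℓ̃∘Ã₁ = Ã₁†∘ℓ̃†` and `ℓ̃∘Ã₂ = Ã₂†∘ℓ̃†`, i.e. `Ã₁` and `Ã₂` are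
variational bivectors on the Kupershmidt deformation. -/
theorem kupershmidt_prop4_bivectors
    {R P Phat K Khat : Type*} [CommRing R]
    [AddCommGroup P] [Module R P] [AddCommGroup Phat] [Module R Phat]
    [AddCommGroup K] [Module R K] [AddCommGroup Khat] [Module R Khat]
    (l₁ l₂ : K →ₗ[R] P) (l₁s l₂s : Phat →ₗ[R] Khat)
    (a₁ a₂ : Phat →ₗ[R] K) (a₁s a₂s : Khat →ₗ[R] P)
    -- the block maps of the Kupershmidt deformation
    (ltil : K × Khat → P × P)
    (hltil : ∀ x : K × Khat, ltil x = (l₁ x.1 + a₁s x.2, l₂ x.1 + a₂s x.2))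
    (ltild : Phat × Phat → Khat × K)
    (hltild : ∀ x : Phat × Phat, ltild x = (l₁s x.1 + l₂s x.2, a₁ x.1 + a₂ x.2))
    (Atil₁ : Phat × Phat → K × Khat)
    (hAtil₁ : ∀ x : Phat × Phat, Atil₁ x = (a₁ x.1 - a₁ x.2, l₁s x.2 + l₂s x.2))
    (Atil₁d : Khat × K → P × P)
    (hAtil₁d : ∀ x : Khat × K, Atil₁d x = (a₁s x.1, -a₁s x.1 + (l₁ x.2 + l₂ x.2)))
    (Atil₂ : Phat × Phat → K × Khat)
    (hAtil₂ : ∀ x : Phat × Phat, Atil₂ x = (a₂ x.1 - a₂ x.2, -(l₁s x.1 + l₂s x.1)))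
    (Atil₂d : Khat × K → P × P)
    (hAtil₂d : ∀ x : Khat × K, Atil₂d x = (a₂s x.1 - (l₁ x.2 + l₂ x.2), -a₂s x.1))
    -- the identities of Lemma 3 restricted to the Kupershmidt deformation
    (h11 : ∀ ψ : Phat, l₁ (a₁ ψ) = a₁s (l₁s ψ))
    (h22 : ∀ ψ : Phat, l₂ (a₂ ψ) = a₂s (l₂s ψ))
    (h12 : ∀ ψ : Phat, l₁ (a₂ ψ) + l₂ (a₁ ψ) = a₁s (l₂s ψ) + a₂s (l₁s ψ)) :
    (∀ x : Phat × Phat, ltil (Atil₁ x) = Atil₁d (ltild x)) ∧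
    (∀ x : Phat × Phat, ltil (Atil₂ x) = Atil₂d (ltild x)) := by
  have hl : ltil = linearization l₁ l₂ a₁s a₂s :=
    funext fun x => by rw [hltil, linearization_apply]
  have hld : ltild = linearizationAdjoint l₁s l₂s a₁ a₂ :=
    funext fun x => by rw [hltild, linearizationAdjoint_apply]
  have hA₁ : Atil₁ = bivector₁ l₁s l₂s a₁ := funext fun x => by rw [hAtil₁, bivector₁_apply]
  have hA₁d : Atil₁d = bivector₁Adjoint l₁ l₂ a₁s :=
    funext fun x => by rw [hAtil₁d, bivector₁Adjoint_apply]
  have hA₂ : Atil₂ = bivector₂ l₁s l₂s a₂ := funext fun x => by rw [hAtil₂, bivector₂_apply]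
  have hA₂d : Atil₂d = bivector₂Adjoint l₁ l₂ a₂s :=
    funext fun x => by rw [hAtil₂d, bivector₂Adjoint_apply]
  subst hl hld hA₁ hA₁d hA₂ hA₂d
  have h11' : l₁ ∘ₗ a₁ = a₁s ∘ₗ l₁s := LinearMap.ext h11
  have h22' : l₂ ∘ₗ a₂ = a₂s ∘ₗ l₂s := LinearMap.ext h22
  have h12' : l₁ ∘ₗ a₂ + l₂ ∘ₗ a₁ = a₁s ∘ₗ l₂s + a₂s ∘ₗ l₁s := LinearMap.ext h12
  exact ⟨LinearMap.congr_fun (linearization_comp_bivector₁ h11' h22' h12'),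
    LinearMap.congr_fun (linearization_comp_bivector₂ h11' h22' h12')⟩
end

section
/- Let B₁, B₂ : P × P̂ → P and B₁*, B₂* : P̂ × P̂ → P̂ be maps, R-linear in each argument, such that ⟨ψ, Bᵢ(p, χ)⟩_P = ⟨Bᵢ*(ψ, χ), p⟩_P for all ψ, χ ∈ P̂, p ∈ P, i = 1, 2 (Bᵢ* is adjoint to Bᵢ in the first argument). Define B̃₁ : (P ⊕ P) × (P̂ ⊕ P̂) → P ⊕ P by B̃₁((p,p'),(ψ₂,ψ₂')) = (B₁(p,ψ₂) − B₁(p,ψ₂'), −B₁(p,ψ₂) − B₂(p,ψ₂') − B₁(p',ψ₂') − B₂(p',ψ₂')) (formula (22) of the paper), and define B̃₁* : (P̂ ⊕ P̂) × (P̂ ⊕ P̂) → P̂ ⊕ P̂ by B̃₁*((ψ₁,ψ₁'),(ψ₂,ψ₂')) = (B₁*(ψ₁,ψ₂) − B₁*(ψ₁,ψ₂') − B₁*(ψ₁',ψ₂) − B₂*(ψ₁',ψ₂'), −B₁*(ψ₁',ψ₂') − B₂*(ψ₁',ψ₂')) (formula (26)). Then, for the direct-sum pairing ⟨(ψ,ψ'),(p,p')⟩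 = ⟨ψ,p⟩_P + ⟨ψ',p'⟩_P, B̃₁* is adjoint to B̃₁ in the first argument: ⟨(ψ₁,ψ₁'), B̃₁((p,p'),(ψ₂,ψ₂'))⟩ = ⟨B̃₁*((ψ₁,ψ₁'),(ψ₂,ψ₂')), (p,p')⟩ for all arguments. (Lemma 6 of the paper, first formula.) -/
/-- Lemma 6 of the paper, first formula: `B̃₁*` (formula (26)) is
adjoint in the first argument to `B̃₁` (formula (22)) for the direct-sum pairing. -/
theorem kupershmidt_lemma6_B1
    {R P Phat Lambda : Type*} [CommRing R]
    [AddCommGroup P] [Module R P] [AddCommGroup Phat] [Module R Phat]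
    [AddCommGroup Lambda] [Module R Lambda]
    (pP : Phat →ₗ[R] P →ₗ[R] Lambda)
    (B₁ B₂ : P →ₗ[R] Phat →ₗ[R] P)
    (B₁s B₂s : Phat →ₗ[R] Phat →ₗ[R] Phat)
    (hB₁ : ∀ (ψ χ : Phat) (p : P), pP ψ (B₁ p χ) = pP (B₁s ψ χ) p)
    (hB₂ : ∀ (ψ χ : Phat) (p : P), pP ψ (B₂ p χ) = pP (B₂s ψ χ) p)
    (Btil₁ : P × P → Phat × Phat → P × P)
    (hBtil₁ : ∀ (pp : P × P) (ψψ : Phat × Phat),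
      Btil₁ pp ψψ = (B₁ pp.1 ψψ.1 - B₁ pp.1 ψψ.2,
        -B₁ pp.1 ψψ.1 - B₂ pp.1 ψψ.2 - B₁ pp.2 ψψ.2 - B₂ pp.2 ψψ.2))
    (Btil₁s : Phat × Phat → Phat × Phat → Phat × Phat)
    (hBtil₁s : ∀ ψψ₁ ψψ₂ : Phat × Phat,
      Btil₁s ψψ₁ ψψ₂ = (B₁s ψψ₁.1 ψψ₂.1 - B₁s ψψ₁.1 ψψ₂.2
          - B₁s ψψ₁.2 ψψ₂.1 - B₂s ψψ₁.2 ψψ₂.2,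
        -B₁s ψψ₁.2 ψψ₂.2 - B₂s ψψ₁.2 ψψ₂.2)) :
    ∀ (ψ₁ ψ₁' ψ₂ ψ₂' : Phat) (p p' : P),
      pP ψ₁ (Btil₁ (p, p') (ψ₂, ψ₂')).1 + pP ψ₁' (Btil₁ (p, p') (ψ₂, ψ₂')).2
        = pP (Btil₁s (ψ₁, ψ₁') (ψ₂, ψ₂')).1 p
          + pP (Btil₁s (ψ₁, ψ₁') (ψ₂, ψ₂')).2 p' := by
  intro ψ₁ ψ₁' ψ₂ ψ₂' p p'
  rw [hBtil₁, hBtil₁s]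
  simp only [map_sub, map_neg, LinearMap.sub_apply, LinearMap.neg_apply, hB₁, hB₂]
  abel
end

section
/- Let B₁, B₂ : P × P̂ → P and B₁*, B₂* : P̂ × P̂ → P̂ be maps, R-linear in each argument, such that ⟨ψ, Bᵢ(p, χ)⟩_P = ⟨Bᵢ*(ψ, χ), p⟩_P for all ψ, χ ∈ P̂, p ∈ P, i = 1, 2 (Bᵢ* is adjoint to Bᵢ in the first argument). Define B̃₂ : (P ⊕ P) × (P̂ ⊕ P̂) → P ⊕ P by B̃₂((p,p'),(ψ₂,ψ₂')) = (B₁(p,ψ₂) + B₂(p,ψ₂) + B₁(p',ψ₂) + B₂(p',ψ₂'), B₂(p',ψ₂) − B₂(p',ψ₂')) (formula (23) of the paper), and define B̃₂* : (P̂ ⊕ P̂) × (P̂ ⊕ P̂) → P̂ ⊕ P̂ by B̃₂*((ψ₁,ψ₁'),(ψ₂,ψ₂')) = (B₁*(ψ₁,ψ₂) + B₂*(ψ₁,ψ₂), B₁*(ψ₁,ψ₂) + B₂*(ψ₁,ψ₂') + B₂*(ψ₁',ψ₂) − B₂*(ψ₁',ψ₂')) (formula (27)). Then, for the direct-sum pairing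 ⟨(ψ,ψ'),(p,p')⟩ = ⟨ψ,p⟩_P + ⟨ψ',p'⟩_P, B̃₂* is adjoint to B̃₂ in the first argument: ⟨(ψ₁,ψ₁'), B̃₂((p,p'),(ψ₂,ψ₂'))⟩ = ⟨B̃₂*((ψ₁,ψ₁'),(ψ₂,ψ₂')), (p,p')⟩ for all arguments. (Lemma 6 of the paper, second formula.) -/
/-- Lemma 6 of the paper, second formula: `B̃₂*` (formula (27)) is
adjoint in the first argument to `B̃₂` (formula (23)) for the direct-sum pairing. -/
theorem kupershmidt_lemma6_B2
    {R P Phat Lambda : Type*} [CommRing R]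
    [AddCommGroup P] [Module R P] [AddCommGroup Phat] [Module R Phat]
    [AddCommGroup Lambda] [Module R Lambda]
    (pP : Phat →ₗ[R] P →ₗ[R] Lambda)
    (B₁ B₂ : P →ₗ[R] Phat →ₗ[R] P)
    (B₁s B₂s : Phat →ₗ[R] Phat →ₗ[R] Phat)
    (hB₁ : ∀ (ψ χ : Phat) (p : P), pP ψ (B₁ p χ) = pP (B₁s ψ χ) p)
    (hB₂ : ∀ (ψ χ : Phat) (p : P), pP ψ (B₂ p χ) = pP (B₂s ψ χ) p)
    (Btil₂ : P × P → Phat × Phat → P × P)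
    (hBtil₂ : ∀ (pp : P × P) (ψψ : Phat × Phat),
      Btil₂ pp ψψ = (B₁ pp.1 ψψ.1 + B₂ pp.1 ψψ.1 + B₁ pp.2 ψψ.1 + B₂ pp.2 ψψ.2,
        B₂ pp.2 ψψ.1 - B₂ pp.2 ψψ.2))
    (Btil₂s : Phat × Phat → Phat × Phat → Phat × Phat)
    (hBtil₂s : ∀ ψψ₁ ψψ₂ : Phat × Phat,
      Btil₂s ψψ₁ ψψ₂ = (B₁s ψψ₁.1 ψψ₂.1 + B₂s ψψ₁.1 ψψ₂.1,
        B₁s ψψ₁.1 ψψ₂.1 + B₂s ψψ₁.1 ψψ₂.2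
          + B₂s ψψ₁.2 ψψ₂.1 - B₂s ψψ₁.2 ψψ₂.2)) :
    ∀ (ψ₁ ψ₁' ψ₂ ψ₂' : Phat) (p p' : P),
      pP ψ₁ (Btil₂ (p, p') (ψ₂, ψ₂')).1 + pP ψ₁' (Btil₂ (p, p') (ψ₂, ψ₂')).2
        = pP (Btil₂s (ψ₁, ψ₁') (ψ₂, ψ₂')).1 p
          + pP (Btil₂s (ψ₁, ψ₁') (ψ₂, ψ₂')).2 p' := by
  intro ψ₁ ψ₁' ψ₂ ψ₂' p p'
  simp only [hBtil₂, hBtil₂s, map_add, map_sub, LinearMap.add_apply, LinearMap.sub_apply, hB₁, hB₂]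
  abel
end

section
/- Let A₁, A₂ : P̂ → κ have adjoints A₁*, A₂* : κ̂ → P, let F ∈ P and w ∈ κ̂, and let ψᵢ, ψᵢ₊₁ ∈ P̂ satisfy A₁(ψᵢ) = A₂(ψᵢ₊₁) (the Magri-hierarchy relation for the generating functions of a hierarchy of conservation laws of the equation F = 0). Then ⟨ψᵢ, F + A₁*(w)⟩_P − ⟨ψᵢ₊₁, A₂*(w)⟩_P = ⟨ψᵢ, F⟩_P. Consequently, if ωᵢ is a conservation law of F = 0 with generating function ψᵢ, i.e. d̄ωᵢ = ⟨ψᵢ, F⟩, then the pair (ψᵢ, −ψᵢ₊₁) is the generating function of a conservation law of the Kupershmidt deformation F + A₁*(w) = 0, A₂*(w) = 0. (The first part of Theorem 8 of the paper.) -/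
theorem pairing_adjoint_eq_of_apply_eq
    {R P Phat K Khat Lambda : Type*} [CommSemiring R]
    [AddCommMonoid P] [Module R P] [AddCommMonoid Phat] [Module R Phat]
    [AddCommMonoid K] [Module R K] [AddCommMonoid Khat] [Module R Khat]
    [AddCommMonoid Lambda] [Module R Lambda]
    {pP : Phat →ₗ[R] P →ₗ[R] Lambda} {pK : Khat →ₗ[R] K →ₗ[R] Lambda}
    {A₁ A₂ : Phat →ₗ[R] K} {A₁s A₂s : Khat →ₗ[R] P}
    (hA₁ : ∀ (ψ : Phat) (χ : Khat), pP ψ (A₁s χ) = pK χ (A₁ ψ))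
    (hA₂ : ∀ (ψ : Phat) (χ : Khat), pP ψ (A₂s χ) = pK χ (A₂ ψ))
    {ψ ψ' : Phat} (h : A₁ ψ = A₂ ψ') (χ : Khat) :
    pP ψ (A₁s χ) = pP ψ' (A₂s χ) := by
  rw [hA₁, hA₂, h]

/-- first part of Theorem 8: if `A₁ ψᵢ = A₂ ψᵢ₊₁`, then
`⟨ψᵢ, F + A₁*(w)⟩ − ⟨ψᵢ₊₁, A₂*(w)⟩ = ⟨ψᵢ, F⟩`; equivalently
`⟨ψᵢ, F + A₁*(w)⟩ + ⟨−ψᵢ₊₁, A₂*(w)⟩ = ⟨ψᵢ, F⟩`, so the pair `(ψᵢ, −ψᵢ₊₁)` is the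
generating function of a conservation law of the Kupershmidt deformation. -/
theorem kupershmidt_thm8_conservation_law
    {R P Phat K Khat Lambda : Type*} [CommRing R]
    [AddCommGroup P] [Module R P] [AddCommGroup Phat] [Module R Phat]
    [AddCommGroup K] [Module R K] [AddCommGroup Khat] [Module R Khat]
    [AddCommGroup Lambda] [Module R Lambda]
    (pP : Phat →ₗ[R] P →ₗ[R] Lambda) (pK : Khat →ₗ[R] K →ₗ[R] Lambda)
    (A₁ A₂ : Phat →ₗ[R] K) (A₁s A₂s : Khat →ₗ[R] P)
    (hA₁ : ∀ (ψ : Phat) (χ : Khat), pP ψ (A₁s χ) = pK χ (A₁ ψ))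
    (hA₂ : ∀ (ψ : Phat) (χ : Khat), pP ψ (A₂s χ) = pK χ (A₂ ψ))
    (F : P) (w : Khat)
    (ψi ψi1 : Phat)
    (hMagri : A₁ ψi = A₂ ψi1) :
    pP ψi (F + A₁s w) - pP ψi1 (A₂s w) = pP ψi F ∧
    pP ψi (F + A₁s w) + pP (-ψi1) (A₂s w) = pP ψi F := by
  have hsub : pP ψi (F + A₁s w) - pP ψi1 (A₂s w) = pP ψi F := by
    rw [map_add, pairing_adjoint_eq_of_apply_eq hA₁ hA₂ hMagri w, add_sub_cancel_right]
  refine ⟨hsub, ?_⟩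
  rwa [map_neg, LinearMap.neg_apply, ← sub_eq_add_neg]
end
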